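/- Let H ∈ ℝ^{p×p} be symmetric positive definite. The iteration matrix of one symmetrized pass of coordinate descent (coordinates 1 to p then p down to 1), T^{CD-sym} = (Id - (e_1e_1ᵀ/H_{11})H)⋯(Id - (e_pe_pᵀ/H_{pp})H)(Id - (e_pe_pᵀ/H_{pp})H)⋯(Id - (e_1e_1ᵀ/H_{11})H), satisfies T^{CD-sym} = H^{-1/2} S H^{1/2} where S = M Mᵀ with M = (Id - H^{1/2}(e_1e_1ᵀ/H_{11})H^{1/2})⋯(Id - H^{1/2}(e_pe_pᵀ/H_{pp})H^{1/2}); in particular S is symmetric positive semidefinite. -/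

import Mathlib

/-
With `R = H^{1/2}` we have `R² = H`, so each coordinate-descent factor is the conjugate
`R⁻¹ P_j R` of `P_j = Id - R e_j e_jᵀ R / H_jj`. The symmetrized pass is therefore
`R⁻¹ (P_1 ⋯ P_p)(P_p ⋯ P_1) R`, and as every `P_j` is symmetric the second product is the
transpose of the first, `M = P_1 ⋯ P_p`; finally `M Mᵀ` is positive semidefinite.
-/

open Matrix

open scoped ComplexOrder in
/-- The square root of a positive semidefinite matrix, as defined in Mathlib (Dec 2024). -/
noncomputable def Matrix.PosSemidef.sqrt {n : Type*} [Fintype n] [DecidableEq n] {𝕜 : Type*}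
    [RCLike 𝕜] {A : Matrix n n 𝕜} (hA : A.PosSemidef) : Matrix n n 𝕜 :=
  hA.1.eigenvectorUnitary.1 * diagonal ((↑) ∘ (√·) ∘ hA.1.eigenvalues) *
    (star hA.1.eigenvectorUnitary : Matrix n n 𝕜)

/-- The single-coordinate iteration matrix `Id - (e_j e_jᵀ / H_{jj}) H`. -/
noncomputable def cdFactor {p : ℕ} (H : Matrix (Fin p) (Fin p) ℝ) (j : Fin p) :
    Matrix (Fin p) (Fin p) ℝ :=
  1 - (H j j)⁻¹ • (Matrix.single j j 1 * H)

/-- The projection factor `Id - H^{1/2}(e_j e_jᵀ/H_{jj})H^{1/2}`. -/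
noncomputable def projFactor {p : ℕ} {H : Matrix (Fin p) (Fin p) ℝ} (hH : H.PosDef)
    (j : Fin p) : Matrix (Fin p) (Fin p) ℝ :=
  1 - (H j j)⁻¹ • (hH.posSemidef.sqrt * Matrix.single j j 1 * hH.posSemidef.sqrt)

theorem Units.list_prod_map_conj {M ι : Type*} [Monoid M] (u : Mˣ) (f : ι → M) (l : List ι) :
    (l.map fun i => ↑u⁻¹ * f i * ↑u).prod = ↑u⁻¹ * (l.map f).prod * ↑u := by
  simpa [Function.comp_def, ConjAct.units_smul_def] using
    (map_list_prod (MulDistribMulAction.toMonoidHom M (ConjAct.toConjAct u⁻¹)) (l.map f)).symm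

open scoped ComplexOrder

namespace Matrix.PosSemidef

variable {n 𝕜 : Type*} [Fintype n] [DecidableEq n] [RCLike 𝕜] {A : Matrix n n 𝕜}

theorem isHermitian_sqrt (hA : A.PosSemidef) : hA.sqrt.IsHermitian := by
  simp only [IsHermitian, sqrt, conjTranspose_mul, star_eq_conjTranspose,
    conjTranspose_conjTranspose, diagonal_conjTranspose, Matrix.mul_assoc]
  congr
  ext i
  simp

theorem sqrt_mul_self (hA : A.PosSemidef) : hA.sqrt * hA.sqrt = A := by
  conv_rhs => rw [hA.1.spectral_theorem, Unitary.conjStarAlgAut_apply]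
  simp only [sqrt, Matrix.mul_assoc,
    ← Matrix.mul_assoc _ (hA.1.eigenvectorUnitary : Matrix n n 𝕜),
    Unitary.coe_star_mul_self, Matrix.one_mul]
  rw [← Matrix.mul_assoc (diagonal _), diagonal_mul_diagonal]
  congr 3
  ext i
  simp [← RCLike.ofReal_mul, Real.mul_self_sqrt (hA.eigenvalues_nonneg i)]

end Matrix.PosSemidef

namespace Matrix

theorem transpose_list_prod_map_of_isSymm {m α ι : Type*} [Fintype m] [DecidableEq m]
    [CommSemiring α] {f : ι → Matrix m m α} (hf : ∀ i, (f i).IsSymm) (l : List ι) :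
    (l.map f).prodᵀ = (l.reverse.map f).prod := by
  have hf' : transpose ∘ f = f := funext fun i => (hf i).eq
  simp [transpose_list_prod, List.map_reverse, hf']

theorem PosDef.isUnit_sqrt {n 𝕜 : Type*} [Fintype n] [DecidableEq n] [RCLike 𝕜]
    {A : Matrix n n 𝕜} (hA : A.PosDef) : IsUnit hA.posSemidef.sqrt :=
  isUnit_of_mul_isUnit_left (hA.posSemidef.sqrt_mul_self ▸ hA.isUnit)

end Matrix

section CoordinateDescent

variable {p : ℕ} {H : Matrix (Fin p) (Fin p) ℝ}

theorem isSymm_projFactor (hH : H.PosDef) (j : Fin p) : (projFactor hH j).IsSymm := by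
  have hR : hH.posSemidef.sqrt.IsSymm := isHermitian_iff_isSymm.mp hH.posSemidef.isHermitian_sqrt
  simp [IsSymm, projFactor, transpose_mul, hR.eq, Matrix.mul_assoc]

theorem cdFactor_eq_conj_projFactor (hH : H.PosDef) (j : Fin p) :
    cdFactor H j = (hH.posSemidef.sqrt)⁻¹ * projFactor hH j * hH.posSemidef.sqrt := by
  unfold cdFactor projFactor
  set R := hH.posSemidef.sqrt
  have hRinvR : R⁻¹ * R = 1 := nonsing_inv_mul R ((isUnit_iff_isUnit_det R).mp hH.isUnit_sqrt)
  have hRR : R * R = H := hH.posSemidef.sqrt_mul_self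
  have hsingle : R⁻¹ * (R * single j j 1 * R) * R = single j j 1 * H := by
    rw [← hRR]
    simp only [← Matrix.mul_assoc, hRinvR, Matrix.one_mul]
  simp only [Matrix.mul_sub, Matrix.sub_mul, Matrix.mul_one, Matrix.mul_smul, Matrix.smul_mul,
    hRinvR, hsingle]

theorem list_prod_map_cdFactor (hH : H.PosDef) (l : List (Fin p)) :
    (l.map (cdFactor H)).prod =
      (hH.posSemidef.sqrt)⁻¹ * (l.map (projFactor hH)).prod * hH.posSemidef.sqrt := by
  obtain ⟨u, hu⟩ := hH.isUnit_sqrt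
  rw [← hu, ← coe_units_inv, ← Units.list_prod_map_conj]
  simp only [coe_units_inv, hu]
  exact congrArg _ (List.map_congr_left fun j _ => cdFactor_eq_conj_projFactor hH j)

end CoordinateDescent

/-- The iteration matrix of one symmetrized pass of coordinate descent (coordinates `1` to `p`
then `p` down to `1`) equals `H^{-1/2} S H^{1/2}` with `S = M Mᵀ` symmetric positive
semidefinite, where `M = (Id - H^{1/2}(e_1e_1ᵀ/H_{11})H^{1/2}) ⋯ (Id - H^{1/2}(e_pe_pᵀ/H_{pp})H^{1/2})`. -/
theorem stmt_10 {p : ℕ} (H : Matrix (Fin p) (Fin p) ℝ) (hH : H.PosDef) :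
    (((List.finRange p).map (cdFactor H)).prod *
        ((List.finRange p).reverse.map (cdFactor H)).prod =
      (hH.posSemidef.sqrt)⁻¹ *
        (((List.finRange p).map (projFactor hH)).prod *
          (((List.finRange p).map (projFactor hH)).prod)ᵀ) * hH.posSemidef.sqrt) ∧
    (((List.finRange p).map (projFactor hH)).prod *
      (((List.finRange p).map (projFactor hH)).prod)ᵀ).PosSemidef := by
  obtain ⟨u, hu⟩ := hH.isUnit_sqrt
  constructor
  · rw [list_prod_map_cdFactor hH, list_prod_map_cdFactor hH,
      transpose_list_prod_map_of_isSymm (isSymm_projFactor hH), ← hu, ← coe_units_inv]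
    simp [Matrix.mul_assoc]
  · rw [← conjTranspose_eq_transpose_of_trivial]
    exact posSemidef_self_mul_conjTranspose _
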